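/- For the game A_G^φ built from the ε-free NFA 𝒜^ε = (Q, Σ_a, Δ^ε, Q₀^ε, Q_f), every play prefix ρ^{n+1} = v_init √ (q₀,ε) √ (q₁,x₁) … √ (qₙ,xₙ) satisfies: (1) {q | (q, xₙ) ∈ I(ρ^{n+1})} = Δ^ε(Q₀^ε, x₁…xₙ), and (2) every element (q, x) of I(ρ^{n+1}) has x = xₙ. -/
import Mathlib


/-- An imperfect-information game structure `(V, Δ, obs, act, v₀)`. -/
structure GameStruct (V A Γ : Type) where
  trans : V → A → Set V
  trans_ne : ∀ v a, (trans v a).Nonempty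
  obs : V → Γ
  act : Γ → Set A
  act_ne : ∀ γ, (act γ).Nonempty
  init : V

namespace GameStruct

variable {V A Γ : Type} (G : GameStruct V A Γ)

/-- Legality of an infinite play `v₀ a₁ v₁ a₂ v₂ …` given by `pos k = v_k`,
`acts k = a_{k+1}`. -/
def IsPlay (pos : ℕ → V) (acts : ℕ → A) : Prop :=
  pos 0 = G.init ∧
    ∀ n, acts n ∈ G.act (G.obs (pos n)) ∧ pos (n + 1) ∈ G.trans (pos n) (acts n)

/-- Information set of Intruder after `n` rounds:
`I(ρ⁰) = {v₀}`, `I(ρ^{k+1}) = Δ(I(ρ^k), a_{k+1}) ∩ obs⁻¹(obs v_{k+1})`. -/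
def infoSet (pos : ℕ → V) (acts : ℕ → A) : ℕ → Set V
  | 0 => {G.init}
  | n + 1 =>
      {v | (∃ u ∈ infoSet pos acts n, v ∈ G.trans u (acts n)) ∧
            G.obs v = G.obs (pos (n + 1))}

/-- Blindfold: all positions share the same observation. -/
def Blindfold : Prop := ∀ v w : V, G.obs v = G.obs w

/-- `Δ({v₀}, a₁…aₙ)`: positions reachable from the initial position under the
action word. -/
def reach (acts : ℕ → A) : ℕ → Set V
  | 0 => {G.init}
  | n + 1 => {v | ∃ u ∈ reach acts n, v ∈ G.trans u (acts n)}

/-- Observation-based strategy of Intruder: chooses an available action from the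
sequence of observations seen so far (most recent first). -/
structure IStrat where
  f : List Γ → A
  valid : ∀ (h : List Γ) (γ : Γ), f (γ :: h) ∈ G.act γ

/-- Perfect-information strategy of Defender: chooses a legal next position from
the history of positions (most recent first) and the chosen action. -/
structure DStrat where
  g : List V → A → V
  valid : ∀ (h : List V) (v : V) (a : A), g (v :: h) a ∈ G.trans v a

variable [Inhabited V]

/-- History of positions (most recent first) of the play `α ⌢ β`. -/
def hist (α : G.IStrat) (β : G.DStrat) : ℕ → List V
  | 0 => [G.init]
  | n + 1 =>
      (β.g (hist α β n) (α.f ((hist α β n).map G.obs))) :: hist α β n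

/-- `k`-th position of the play `α ⌢ β`. -/
def playPos (α : G.IStrat) (β : G.DStrat) (n : ℕ) : V := (G.hist α β n).headI

/-- `(k+1)`-th action of the play `α ⌢ β`. -/
def playAct (α : G.IStrat) (β : G.DStrat) (n : ℕ) : A :=
  α.f ((G.hist α β n).map G.obs)

/-- Information sets along the play `α ⌢ β`. -/
def playInfo (α : G.IStrat) (β : G.DStrat) : ℕ → Set V :=
  G.infoSet (G.playPos α β) (G.playAct α β)

/-- The play `α ⌢ β` is `S`-opaque: the information set is never included in `S`. -/
def Opaque (S : Set V) (α : G.IStrat) (β : G.DStrat) : Prop :=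
  ∀ k, ¬ G.playInfo α β k ⊆ S

end GameStruct

section DFA

variable {Q A : Type}

/-- Run of a partial DFA `δ` from a state over a word (`none` if undefined). -/
def runD (δ : Q → A → Option Q) : Q → List A → Option Q
  | q, [] => some q
  | q, a :: w =>
      match δ q a with
      | none => none
      | some q' => runD δ q' w

/-- Execution traces: words on which the run from `q₀` is defined. -/
def Traces (δ : Q → A → Option Q) (q0 : Q) : Set (List A) :=
  {w | ∃ q, runD δ q0 w = some q}

variable (obsv : A → Prop) [DecidablePred obsv]

/-- Projection `P_{Σ_a}` erasing unobservable letters. -/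
def proj (w : List A) : List A := w.filter fun a => decide (obsv a)

/-- `Q₀^ε`: states reachable from `q₀` by unobservable words. -/
def Q0eps (δ : Q → A → Option Q) (q0 : Q) : Set Q :=
  {q | ∃ w : List A, (∀ x ∈ w, ¬ obsv x) ∧ runD δ q0 w = some q}

/-- `Δ^ε q x`: states reachable from `q` by a word in `(Σ∖Σ_a)* x (Σ∖Σ_a)*`. -/
def stepEps (δ : Q → A → Option Q) (q : Q) (x : A) : Set Q :=
  {q' | ∃ w₁ w₂ : List A, (∀ y ∈ w₁, ¬ obsv y) ∧ (∀ y ∈ w₂, ¬ obsv y) ∧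
      runD δ q (w₁ ++ x :: w₂) = some q'}

/-- Extension of a nondeterministic step function to sets of states and
words. -/
def wordStep (step : Q → A → Set Q) (P : Set Q) : List A → Set Q
  | [] => P
  | a :: w => wordStep step {q' | ∃ q ∈ P, q' ∈ step q a} w

end DFA

section EpsGame

variable {Q A : Type}

/-- The game `A_G^φ` built from an ε-free NFA `(Q, Σ_a, Δ^ε, Q₀^ε, Q_f)`:
positions `Q × Σ_a ∪ Q₀^ε × {ε} ∪ {v_init}` (`none` is `v_init`, second
component `none` is `ε`), the single action `√ : Unit`, observations `γ_x`
given by the second component. -/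
def epsGame (step : Q → A → Set Q) (Q0 : Set Q) (h0 : Q0.Nonempty)
    (hstep : ∀ q, ∃ a, (step q a).Nonempty) :
    GameStruct (Option (Q × Option A)) Unit (Option A) where
  trans v _ :=
    match v with
    | none => (fun q => some (q, (none : Option A))) '' Q0
    | some p => {v' | ∃ y q', q' ∈ step p.1 y ∧ v' = some (q', some y)}
  trans_ne v a := by
    cases v with
    | none => exact h0.image _
    | some p =>
      obtain ⟨y, q', hq'⟩ := hstep p.1
      exact ⟨some (q', some y), y, q', hq', rfl⟩
  obs v :=
    match v with
    | none => none
    | some p => p.2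
  act _ := Set.univ
  act_ne _ := ⟨(), trivial⟩
  init := none

/-- Secret positions `S = Q_f × (Σ_a ∪ {ε})`. -/
def epsSecrets (Qf : Set Q) : Set (Option (Q × Option A)) :=
  {v | ∃ q x, q ∈ Qf ∧ v = some (q, x)}

end EpsGame


lemma wordStep_append {Q A : Type} (step : Q → A → Set Q) (P : Set Q)
    (w₁ w₂ : List A) :
    wordStep step P (w₁ ++ w₂) = wordStep step (wordStep step P w₁) w₂ := by
  induction w₁ generalizing P with
  | nil => rfl
  | cons a w ih => exact ih _

/-- In the game `A_G^φ`, along any play prefix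
`ρ^{n+1} = v_init √ (q₀,ε) √ (q₁,x₁) … √ (qₙ,xₙ)`:
(1) every element of `I(ρ^{n+1})` has second component `xₙ`, and
(2) `{q | (q, xₙ) ∈ I(ρ^{n+1})} = Δ^ε(Q₀^ε, x₁…xₙ)`. -/
theorem epsGame_infoSet {Q A : Type} (step : Q → A → Set Q) (Q0 : Set Q)
    (h0 : Q0.Nonempty) (hstep : ∀ q, ∃ a, (step q a).Nonempty)
    (pos : ℕ → Option (Q × Option A)) (acts : ℕ → Unit)
    (hp : (epsGame step Q0 h0 hstep).IsPlay pos acts)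
    (qs : ℕ → Q) (xs : ℕ → Option A)
    (hpos : ∀ n, pos (n + 1) = some (qs n, xs n))
    (as : ℕ → A) (hxs : ∀ k, 1 ≤ k → xs k = some (as k)) (n : ℕ) :
    (∀ v ∈ (epsGame step Q0 h0 hstep).infoSet pos acts (n + 1),
        ∃ q, v = some (q, xs n)) ∧
    {q | some (q, xs n) ∈ (epsGame step Q0 h0 hstep).infoSet pos acts (n + 1)} =
      wordStep step Q0 (List.ofFn fun i : Fin n => as (i.val + 1)) := by
  set G := epsGame step Q0 h0 hstep with hG
  have hobs : ∀ n, G.obs (pos (n + 1)) = xs n := by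
    intro n; rw [hpos n]; rfl
  induction n with
  | zero =>
    have h1 : pos 1 ∈ G.trans (pos 0) (acts 0) := (hp.2 0).2
    rw [hp.1] at h1
    have hx0 : xs 0 = none := by
      obtain ⟨q0, hq0, he⟩ := h1
      rw [hpos 0] at he
      exact (Prod.ext_iff.mp (Option.some_injective _ he)).2.symm
    constructor
    · rintro v ⟨⟨u, hu, hv⟩, hov⟩
      have hu' : u = none := hu
      subst hu'
      obtain ⟨q0, hq0, he⟩ := hv
      exact ⟨q0, by rw [← he, hx0]⟩
    · ext q
      simp only [Set.mem_setOf_eq, List.ofFn_zero, wordStep]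
      constructor
      · rintro ⟨⟨u, hu, hv⟩, -⟩
        have hu' : u = none := hu
        subst hu'
        obtain ⟨q0, hq0, he⟩ := hv
        have h1 : q0 = q := (Prod.ext_iff.mp (Option.some_injective _ he)).1
        exact h1 ▸ hq0
      · intro hq
        exact ⟨⟨none, rfl, ⟨q, hq, by rw [hx0]⟩⟩, (hobs 0).symm⟩
  | succ n ih =>
    obtain ⟨ih1, ih2⟩ := ih
    have hxn1 : xs (n + 1) = some (as (n + 1)) := hxs (n + 1) (Nat.le_add_left 1 n)
    have hofn : (List.ofFn fun i : Fin (n + 1) => as (i.val + 1)) =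
        (List.ofFn fun i : Fin n => as (i.val + 1)) ++ [as (n + 1)] := by
      rw [List.ofFn_succ']
      simp [List.concat_eq_append]
    constructor
    · rintro v ⟨⟨u, hu, hv⟩, hov⟩
      obtain ⟨q, hq⟩ := ih1 u hu
      subst hq
      obtain ⟨y, q', hq', he⟩ := hv
      subst he
      have hy : some y = xs (n + 1) := hov.trans (hobs (n + 1))
      exact ⟨q', by rw [hy]⟩
    · ext q'
      simp only [Set.mem_setOf_eq, hofn, wordStep_append, wordStep]
      constructor
      · rintro ⟨⟨u, hu, hv⟩, -⟩
        obtain ⟨q, hq⟩ := ih1 u hu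
        subst hq
        obtain ⟨y, q'', hq'', he⟩ := hv
        have hpe := Prod.ext_iff.mp (Option.some_injective _ he)
        have h1 : q'' = q' := hpe.1.symm
        have h2 : xs (n + 1) = some y := hpe.2
        have hy : y = as (n + 1) := Option.some_injective _ (h2.symm.trans hxn1)
        subst h1; subst hy
        exact ⟨q, ih2 ▸ (hu : q ∈ {p | some (p, xs n) ∈ G.infoSet pos acts (n + 1)}), hq''⟩
      · rintro ⟨q, hq, hq'⟩
        have hqmem : some (q, xs n) ∈ G.infoSet pos acts (n + 1) :=
          (ih2.symm ▸ hq : q ∈ {p | some (p, xs n) ∈ G.infoSet pos acts (n + 1)})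
        exact ⟨⟨some (q, xs n), hqmem, ⟨as (n + 1), q', hq', by rw [hxn1]⟩⟩,
          (hobs (n + 1)).symm⟩
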